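/- arXiv:2206.05101 — 4 statements merged into one kernel-verified Lean document; each statement's English description precedes it below -/
import Mathlib

section
/- Let b ≥ 1 be an integer, let d > 1 be a real number, and define f : ℝ → ℝ by f(z) = (1-(d-1)z)^(-1/(d-1)) - 1 (real power of the positive base 1-(d-1)z). Then for every real z with |z| < 1/(d-1): iteratedDeriv b f z = (∏_{i=1}^{b-1} ((d-1)·i + 1)) · (1 + f z)^(b(d-1)+1), where the outer power is the real power of the positive base 1 + f z; moreover f 0 = 0 and iteratedDeriv k f 0 = ∏_{i=1}^{k-1} ((d-1)·i + 1) for every 1 ≤ k ≤ b-1. -/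
private lemma bd_aux (c p : ℝ) (z : ℝ) (h : 0 < 1 - c * z) :
    HasDerivAt (fun z : ℝ => (1 - c * z) ^ p) (p * (1 - c * z) ^ (p - 1) * (-c)) z := by
  have h1 : HasDerivAt (fun z : ℝ => 1 - c * z) (-c) z := by
    simpa using (((hasDerivAt_id z).const_mul c).const_sub (1 : ℝ))
  exact (Real.hasDerivAt_rpow_const (Or.inl h.ne')).comp z h1

theorem bd_ary_increasing_trees_egf (b : ℕ) (hb : 1 ≤ b) (d : ℝ) (hd : 1 < d)
    (f : ℝ → ℝ)
    (hf : ∀ z : ℝ, f z = (1 - (d - 1) * z) ^ (-1 / (d - 1)) - 1) :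
    (∀ z : ℝ, |z| < 1 / (d - 1) →
      iteratedDeriv b f z =
        (∏ i ∈ Finset.Icc 1 (b - 1), ((d - 1) * (i : ℝ) + 1)) *
          (1 + f z) ^ ((b : ℝ) * (d - 1) + 1)) ∧
    f 0 = 0 ∧
    (∀ k : ℕ, 1 ≤ k → k ≤ b - 1 →
      iteratedDeriv k f 0 = ∏ i ∈ Finset.Icc 1 (k - 1), ((d - 1) * (i : ℝ) + 1)) := by
  set c : ℝ := d - 1 with hc
  have hc0 : 0 < c := by simp [hc]; linarith
  have hpos : ∀ z : ℝ, z < 1 / c → 0 < 1 - c * z := by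
    intro z hz
    have : c * z < 1 := by
      have := (lt_div_iff₀' hc0).mp hz
      linarith
    linarith
  -- key induction
  have key : ∀ k : ℕ, ∀ z : ℝ, z < 1 / c →
      iteratedDeriv (k + 1) f z =
        (∏ i ∈ Finset.Icc 1 k, (c * (i : ℝ) + 1)) * (1 - c * z) ^ (-1 / c - (k + 1)) := by
    intro k
    induction k with
    | zero =>
      intro z hz
      have h := hpos z hz
      have hfe : f = fun z : ℝ => (1 - c * z) ^ (-1 / c) - 1 := funext hf
      have hder : HasDerivAt f ((-1 / c) * (1 - c * z) ^ (-1 / c - 1) * (-c)) z := by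
        rw [hfe]
        exact (bd_aux c (-1 / c) z h).sub_const 1
      rw [iteratedDeriv_one, hder.deriv]
      have : (-1 / c) * (1 - c * z) ^ (-1 / c - 1) * (-c) = (1 - c * z) ^ (-1 / c - 1) := by
        field_simp
      rw [this]
      norm_num
    | succ k ih =>
      intro z hz
      have h := hpos z hz
      have hev : iteratedDeriv (k + 1) f =ᶠ[nhds z]
          fun w => (∏ i ∈ Finset.Icc 1 k, (c * (i : ℝ) + 1)) *
            (1 - c * w) ^ (-1 / c - (k + 1)) :=
        Filter.eventuallyEq_of_mem (Iio_mem_nhds hz) (fun w hw => ih w hw)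
      rw [iteratedDeriv_succ, hev.deriv_eq]
      have hder := ((bd_aux c (-1 / c - (k + 1)) z h).const_mul
        (∏ i ∈ Finset.Icc 1 k, (c * (i : ℝ) + 1)))
      rw [hder.deriv]
      rw [Finset.prod_Icc_succ_top (Nat.le_add_left 1 k)]
      have he : -1 / c - (↑k + 1) - 1 = -1 / c - (↑(k + 1) + 1) := by push_cast; ring
      rw [he]
      have hcoef : (∏ i ∈ Finset.Icc 1 k, (c * (i : ℝ) + 1)) *
          ((-1 / c - (↑k + 1)) * (1 - c * z) ^ (-1 / c - (↑(k+1) + 1)) * (-c)) =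
          ((∏ i ∈ Finset.Icc 1 k, (c * (i : ℝ) + 1)) * (c * (↑(k+1) : ℝ) + 1)) *
            (1 - c * z) ^ (-1 / c - (↑(k+1) + 1)) := by
      -- coefficient algebra
        push_cast
        field_simp
        ring
      rw [hcoef]
  refine ⟨?_, ?_, ?_⟩
  · intro z hz
    have hz' : z < 1 / c := lt_of_abs_lt hz
    have h := hpos z hz'
    obtain ⟨m, rfl⟩ : ∃ m, b = m + 1 := ⟨b - 1, (Nat.succ_pred_eq_of_pos hb).symm⟩
    rw [key m z hz']
    have h1f : 1 + f z = (1 - c * z) ^ (-1 / c) := by rw [hf]; ring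
    have hp : (-1 / c) * ((↑(m + 1) : ℝ) * c + 1) = -1 / c - (↑m + 1) := by
      push_cast; field_simp; ring
    rw [h1f, ← Real.rpow_mul h.le, hp]
    norm_num
  · simp [hf]
  · intro k hk1 hk2
    obtain ⟨m, rfl⟩ : ∃ m, k = m + 1 := ⟨k - 1, (Nat.succ_pred_eq_of_pos hk1).symm⟩
    have h0 : (0 : ℝ) < 1 / c := by positivity
    rw [key m 0 h0]
    simp
end

section
/- Let b ≥ 1 be an integer, let α > 0 be a real number, and define g : ℝ → ℝ by g(z) = 1 - (1-(α+1)z)^(1/(α+1)) (real power of the positive base 1-(α+1)z). Then for every real z with |z| < 1/(α+1): iteratedDeriv b g z = (∏_{i=1}^{b-1} ((α+1)·i - 1)) · (1 - g z)^(-((α+1)b-1)), where the outer power is the real power of the positive base 1 - g z; moreover g 0 = 0 and iteratedDeriv k g 0 = ∏_{i=1}^{k-1} ((α+1)·i - 1) for every 1 ≤ k ≤ b-1. -/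
lemma aux_deriv (α : ℝ) (hα : 0 < α) (g : ℝ → ℝ)
    (hg : ∀ z : ℝ, g z = 1 - (1 - (α + 1) * z) ^ (1 / (α + 1))) :
    ∀ k : ℕ, 1 ≤ k → ∀ z : ℝ, z < 1 / (α + 1) →
      iteratedDeriv k g z =
        (∏ i ∈ Finset.Icc 1 (k - 1), ((α + 1) * (i : ℝ) - 1)) *
          (1 - (α + 1) * z) ^ (1 / (α + 1) - (k : ℝ)) := by
  have hα1 : (0:ℝ) < α + 1 := by linarith
  have hbase : ∀ z : ℝ, z < 1 / (α + 1) → 0 < 1 - (α + 1) * z := by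
    intro z hz
    have : (α + 1) * z < 1 := by
      rw [lt_div_iff₀ hα1] at hz; linarith [hz]
    linarith
  intro k hk
  induction k with
  | zero => omega
  | succ k ih =>
    rcases Nat.eq_or_lt_of_le hk with h1 | h1
    · have hk0 : k = 0 := by omega
      subst hk0
      intro z hz
      have hb := hbase z hz
      have hd : HasDerivAt (fun w : ℝ => 1 - (α + 1) * w) (-(α + 1)) z := by
        simpa using ((hasDerivAt_id z).const_mul (α + 1)).const_sub 1
      have hd2 : HasDerivAt (fun w : ℝ => (1 - (α + 1) * w) ^ (1 / (α + 1)))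
          (-(α + 1) * (1 / (α + 1)) * (1 - (α + 1) * z) ^ (1 / (α + 1) - 1)) z :=
        hd.rpow_const (Or.inl (ne_of_gt hb))
      have hdg : HasDerivAt g
          (-(-(α + 1) * (1 / (α + 1)) * (1 - (α + 1) * z) ^ (1 / (α + 1) - 1))) z := by
        have := hd2.const_sub 1
        exact this.congr_of_eventuallyEq (Filter.Eventually.of_forall fun w => (hg w))
      rw [iteratedDeriv_one, hdg.deriv]
      simp only [Nat.zero_add, Nat.sub_self, Finset.Icc_self]
      have h5 : -(-(α + 1) * (1 / (α + 1)) * (1 - (α + 1) * z) ^ (1 / (α + 1) - 1))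
          = (1 - (α + 1) * z) ^ (1 / (α + 1) - 1) := by
        field_simp
      rw [h5]
      norm_num
    · have hk1 : 1 ≤ k := by omega
      intro z hz
      rw [iteratedDeriv_succ]
      set C := ∏ i ∈ Finset.Icc 1 (k - 1), ((α + 1) * (i : ℝ) - 1) with hC
      have hev : iteratedDeriv k g =ᶠ[nhds z]
          fun w => C * (1 - (α + 1) * w) ^ (1 / (α + 1) - (k : ℝ)) := by
        filter_upwards [Iio_mem_nhds hz] with w hw
        exact ih hk1 w hw
      rw [hev.deriv_eq]
      have hb := hbase z hz
      have hd : HasDerivAt (fun w : ℝ => 1 - (α + 1) * w) (-(α + 1)) z := by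
        simpa using ((hasDerivAt_id z).const_mul (α + 1)).const_sub 1
      have hd2 : HasDerivAt (fun w : ℝ => C * (1 - (α + 1) * w) ^ (1 / (α + 1) - (k : ℝ)))
          (C * (-(α + 1) * (1 / (α + 1) - (k : ℝ)) *
            (1 - (α + 1) * z) ^ (1 / (α + 1) - (k : ℝ) - 1))) z :=
        (hd.rpow_const (Or.inl (ne_of_gt hb))).const_mul C
      rw [hd2.deriv]
      have hprod : ∏ i ∈ Finset.Icc 1 (k + 1 - 1), ((α + 1) * (i : ℝ) - 1)
          = C * ((α + 1) * (k : ℝ) - 1) := by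
        have h2 : k + 1 - 1 = (k - 1) + 1 := by omega
        rw [h2, Finset.prod_Icc_succ_top (by omega : 1 ≤ (k-1)+1)]
        have h3 : ((k : ℕ) - 1 + 1 : ℕ) = k := by omega
        rw [h3]
      rw [hprod]
      have hcoef : -(α + 1) * (1 / (α + 1) - (k : ℝ)) = (α + 1) * (k : ℝ) - 1 := by
        field_simp; ring
      push_cast
      have h1 : 1 / (α + 1) - ((k : ℝ) + 1) = (1 / (α + 1) - (k : ℝ)) - 1 := by ring
      rw [h1, ← hcoef]
      ring

theorem b_alpha_ports_egf (b : ℕ) (hb : 1 ≤ b) (α : ℝ) (hα : 0 < α)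
    (g : ℝ → ℝ)
    (hg : ∀ z : ℝ, g z = 1 - (1 - (α + 1) * z) ^ (1 / (α + 1))) :
    (∀ z : ℝ, |z| < 1 / (α + 1) →
      iteratedDeriv b g z =
        (∏ i ∈ Finset.Icc 1 (b - 1), ((α + 1) * (i : ℝ) - 1)) *
          (1 - g z) ^ (-((α + 1) * (b : ℝ) - 1))) ∧
    g 0 = 0 ∧
    (∀ k : ℕ, 1 ≤ k → k ≤ b - 1 →
      iteratedDeriv k g 0 = ∏ i ∈ Finset.Icc 1 (k - 1), ((α + 1) * (i : ℝ) - 1)) := by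
  have hα1 : (0:ℝ) < α + 1 := by linarith
  refine ⟨?_, ?_, ?_⟩
  · intro z hz
    have hz' : z < 1 / (α + 1) := lt_of_le_of_lt (le_abs_self z) hz
    have hb2 : (α + 1) * z < 1 := by rw [lt_div_iff₀ hα1] at hz'; linarith
    have hbase : (0:ℝ) < 1 - (α + 1) * z := by linarith
    rw [aux_deriv α hα g hg b hb z hz']
    congr 1
    rw [hg z, sub_sub_cancel, ← Real.rpow_mul hbase.le]
    congr 1
    field_simp
    ring
  · rw [hg 0]; norm_num
  · intro k hk hkb
    have h0 : (0:ℝ) < 1 / (α + 1) := by positivity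
    rw [aux_deriv α hα g hg k hk 0 h0]
    norm_num
end

section
/- Let α > 0 be a real number and define g : ℝ → ℝ by g(z) = 1 - (1-(α+1)z)^(1/(α+1)) (real power of the positive base, for |z| < 1/(α+1)). Then for every integer n ≥ 1: iteratedDeriv n g 0 = ∏_{k=1}^{n-1} ((α+1)·k - 1). -/
theorem b_alpha_ports_total_weights (α : ℝ) (hα : 0 < α)
    (g : ℝ → ℝ)
    (hg : ∀ z : ℝ, g z = 1 - (1 - (α + 1) * z) ^ (1 / (α + 1))) :
    ∀ n : ℕ, 1 ≤ n →
      iteratedDeriv n g 0 = ∏ k ∈ Finset.Icc 1 (n - 1), ((α + 1) * (k : ℝ) - 1) := by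
  have hα1 : (0:ℝ) < α + 1 := by linarith
  set p : ℝ := 1 / (α + 1) with hp
  have hap : (α + 1) * p = 1 := by
    rw [hp]; field_simp
  have hU : IsOpen {z : ℝ | 0 < 1 - (α + 1) * z} :=
    isOpen_lt continuous_const (by continuity)
  have hder : ∀ (q : ℝ) (z : ℝ), 0 < 1 - (α + 1) * z →
      HasDerivAt (fun x => (1 - (α + 1) * x) ^ q)
        (-(α + 1) * q * (1 - (α + 1) * z) ^ (q - 1)) z := by
    intro q z hz
    have h1 : HasDerivAt (fun x : ℝ => 1 - (α + 1) * x) (-(α + 1)) z := by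
      simpa using ((hasDerivAt_id z).const_mul (α + 1)).const_sub 1
    exact h1.rpow_const (Or.inl (ne_of_gt hz))
  have key : ∀ n : ℕ, 1 ≤ n → ∀ z : ℝ, 0 < 1 - (α + 1) * z →
      iteratedDeriv n g z =
        (∏ k ∈ Finset.Icc 1 (n - 1), ((α + 1) * (k : ℝ) - 1)) *
          (1 - (α + 1) * z) ^ (p - n) := by
    intro n
    induction n with
    | zero => intro h; omega
    | succ m ih =>
      intro _ z hz
      rcases Nat.eq_zero_or_pos m with hm | hm
      · subst hm
        have hgeq : g = fun x => 1 - (1 - (α + 1) * x) ^ p := funext hg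
        have hgd : HasDerivAt g ((1 - (α + 1) * z) ^ (p - 1)) z := by
          rw [hgeq]
          have h2 := (hder p z hz).const_sub 1
          have heq : -(-(α + 1) * p * (1 - (α + 1) * z) ^ (p - 1))
              = (1 - (α + 1) * z) ^ (p - 1) := by
            linear_combination ((1 - (α + 1) * z) ^ (p - 1)) * hap
          rwa [heq] at h2
        rw [show (0 + 1 : ℕ) = 1 from rfl, iteratedDeriv_one, hgd.deriv]
        norm_num
      · rw [iteratedDeriv_succ]
        have hev : iteratedDeriv m g =ᶠ[nhds z]
            (fun y => (∏ k ∈ Finset.Icc 1 (m - 1), ((α + 1) * (k : ℝ) - 1)) *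
              (1 - (α + 1) * y) ^ (p - m)) :=
          Filter.eventuallyEq_of_mem (hU.mem_nhds hz) (fun y hy => ih hm y hy)
        rw [hev.deriv_eq]
        have hd := ((hder (p - m) z hz).const_mul
          (∏ k ∈ Finset.Icc 1 (m - 1), ((α + 1) * (k : ℝ) - 1)))
        rw [hd.deriv]
        have hmm : m = (m - 1) + 1 := by omega
        have hprod : ∏ k ∈ Finset.Icc 1 (m + 1 - 1), ((α + 1) * (k : ℝ) - 1)
            = (∏ k ∈ Finset.Icc 1 (m - 1), ((α + 1) * (k : ℝ) - 1)) *
              ((α + 1) * (m : ℝ) - 1) := by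
          have : m + 1 - 1 = (m - 1) + 1 := by omega
          rw [this, Finset.prod_Icc_succ_top (by omega : 1 ≤ (m - 1) + 1)]
          rw [← hmm]
        rw [hprod]
        have hexp : p - (m : ℝ) - 1 = p - ((m : ℕ) + 1 : ℕ) := by
          push_cast; ring
        rw [← hexp]
        linear_combination (-(∏ k ∈ Finset.Icc 1 (m - 1), ((α + 1) * (k : ℝ) - 1))
          * (1 - (α + 1) * z) ^ (p - (m : ℝ) - 1)) * hap
  intro n hn
  have h0 : (0:ℝ) < 1 - (α + 1) * 0 := by norm_num
  rw [key n hn 0 h0]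
  norm_num
end

section
/- Let b ≥ 1 be an integer, let c₁ > 0, c₂ ≠ 0 and ψ₁ > 0 be real numbers, and define T : ℝ → ℝ by T(z) = (ψ₁/c₂)·((1 - c₁·z)^(-c₂/c₁) - 1) for |z| < 1/c₁ (real powers of positive bases). Then for every real z with |z| < 1/c₁: iteratedDeriv b T z = (ψ₁/c₂) · c₁^b · (∏_{i=0}^{b-1} (c₂/c₁ + i)) · (1 + (c₂/ψ₁)·T(z))^(1 + b·c₁/c₂). -/
lemma aux_itd (c₁ c₂ ψ₁ : ℝ) (hc₁ : 0 < c₁) (hc₂ : c₂ ≠ 0)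
    (T : ℝ → ℝ)
    (hT : ∀ z : ℝ, |z| < 1 / c₁ →
      T z = (ψ₁ / c₂) * ((1 - c₁ * z) ^ (-c₂ / c₁) - 1)) :
    ∀ n : ℕ, ∀ z : ℝ, |z| < 1 / c₁ →
      iteratedDeriv n T z =
        (ψ₁ / c₂) * c₁ ^ n * (∏ i ∈ Finset.range n, (c₂ / c₁ + (i : ℝ))) *
          (1 - c₁ * z) ^ (-c₂ / c₁ - n) - (if n = 0 then ψ₁ / c₂ else 0) := by
  have hSopen : IsOpen {z : ℝ | |z| < 1 / c₁} := by
    have : {z : ℝ | |z| < 1 / c₁} = Set.Ioo (-(1 / c₁)) (1 / c₁) := by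
      ext z; simp [abs_lt, Set.mem_Ioo]
    rw [this]; exact isOpen_Ioo
  have hpos : ∀ z : ℝ, |z| < 1 / c₁ → 0 < 1 - c₁ * z := by
    intro z hz
    have h1 : z < 1 / c₁ := (abs_lt.mp hz).2
    have h2 : c₁ * z < 1 := by rw [mul_comm]; exact (lt_div_iff₀ hc₁).mp h1
    linarith
  intro n
  induction n with
  | zero =>
    intro z hz
    simp only [iteratedDeriv_zero, hT z hz, pow_zero, Finset.range_zero,
      Finset.prod_empty, Nat.cast_zero, if_pos rfl, if_true]
    ring_nf
  | succ n ih =>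
    intro z hz
    have hzmem : z ∈ {z : ℝ | |z| < 1 / c₁} := hz
    set C : ℝ := (ψ₁ / c₂) * c₁ ^ n * (∏ i ∈ Finset.range n, (c₂ / c₁ + (i : ℝ))) with hC
    set p : ℝ := -c₂ / c₁ - n with hp
    set G : ℝ → ℝ := fun w => C * (1 - c₁ * w) ^ p - (if n = 0 then ψ₁ / c₂ else 0)
      with hG
    have hev : iteratedDeriv n T =ᶠ[nhds z] G := by
      filter_upwards [hSopen.mem_nhds hzmem] with w hw
      exact ih w hw
    have hinner : HasDerivAt (fun w : ℝ => 1 - c₁ * w) (0 - c₁ * 1) z :=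
      (hasDerivAt_const z 1).sub ((hasDerivAt_id z).const_mul c₁)
    have hrpow : HasDerivAt (fun x : ℝ => x ^ p) (p * (1 - c₁ * z) ^ (p - 1))
        (1 - c₁ * z) :=
      Real.hasDerivAt_rpow_const (Or.inl (hpos z hz).ne')
    have hGder : HasDerivAt G (C * (p * (1 - c₁ * z) ^ (p - 1) * (0 - c₁ * 1))) z := by
      exact ((hrpow.comp z hinner).const_mul C).sub_const _
    rw [iteratedDeriv_succ, hev.deriv_eq, hGder.deriv]
    have hpm1 : p - 1 = -c₂ / c₁ - ((n : ℝ) + 1) := by rw [hp]; ring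
    rw [hpm1]
    simp only [Nat.succ_ne_zero, if_false, Finset.prod_range_succ, Nat.cast_succ, sub_zero]
    rw [hC, hp]
    field_simp
    ring

theorem affine_ratio_degree_weight_gf (b : ℕ) (hb : 1 ≤ b)
    (c₁ c₂ ψ₁ : ℝ) (hc₁ : 0 < c₁) (hc₂ : c₂ ≠ 0) (hψ₁ : 0 < ψ₁)
    (T : ℝ → ℝ)
    (hT : ∀ z : ℝ, |z| < 1 / c₁ →
      T z = (ψ₁ / c₂) * ((1 - c₁ * z) ^ (-c₂ / c₁) - 1)) :
    ∀ z : ℝ, |z| < 1 / c₁ →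
      iteratedDeriv b T z =
        (ψ₁ / c₂) * c₁ ^ b * (∏ i ∈ Finset.range b, (c₂ / c₁ + (i : ℝ))) *
          (1 + (c₂ / ψ₁) * T z) ^ (1 + (b : ℝ) * c₁ / c₂) := by
  intro z hz
  have hpos : 0 < 1 - c₁ * z := by
    have h1 : z < 1 / c₁ := (abs_lt.mp hz).2
    have h2 : c₁ * z < 1 := by rw [mul_comm]; exact (lt_div_iff₀ hc₁).mp h1
    linarith
  have key := aux_itd c₁ c₂ ψ₁ hc₁ hc₂ T hT b z hz
  have hb0 : b ≠ 0 := Nat.one_le_iff_ne_zero.mp hb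
  rw [if_neg hb0, sub_zero] at key
  rw [key, hT z hz]
  have hbase : 1 + c₂ / ψ₁ * ((ψ₁ / c₂) * ((1 - c₁ * z) ^ (-c₂ / c₁) - 1))
      = (1 - c₁ * z) ^ (-c₂ / c₁) := by
    field_simp
    ring
  have hexp : -c₂ / c₁ * (1 + (b : ℝ) * c₁ / c₂) = -c₂ / c₁ - b := by
    field_simp
    ring
  rw [hbase, ← hexp, Real.rpow_mul hpos.le]
end
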